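/- arXiv:1805.08143 — 2 statements merged into one kernel-verified Lean document; each statement's English description precedes it below -/
import Mathlib

section
/- In a block graph G, a vertex v is an inner vertex of some Steiner tree for a k-set S ⊆ V(G)∖{v} if and only if v is a cut vertex of G and the vertices of S do not all lie in a single connected component of G∖v; moreover in that case v is an inner vertex of every Steiner tree for S. -/
/-! If any two vertices of `S` are joined by a path avoiding `v`, a Steiner tree `T` through `v`
can be shortened. By minimality every component of `T - v` contains a vertex of `S`, so any two
`T`-neighbours of `v` are joined by a path avoiding `v`, which closes a cycle through `v`. A cycle
is biconnected, hence lies in a block, and blocks are cliques: the `T`-neighbours of `v` are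
pairwise adjacent, and replacing the star at `v` by a star centred at one of them saves an edge.
Conversely, if `v` separates two vertices of `S`, every connected subgraph containing `S` passes
through `v`. -/

open SimpleGraph Finset
open scoped Classical

/-- The Steiner distance of a vertex set `S` in `G`: the minimum number of edges of a
connected subgraph of `G` whose vertex set contains `S`. -/
noncomputable def steinerDist {V : Type*} (G : SimpleGraph V) (S : Set V) : ℕ :=
  sInf {m | ∃ H : G.Subgraph, H.Connected ∧ S ⊆ H.verts ∧ H.edgeSet.ncard = m}

/-- The Steiner `k`-Wiener index: the sum of Steiner distances over all `k`-element
vertex subsets. -/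
noncomputable def steinerWiener {V : Type*} [Fintype V] (G : SimpleGraph V) (k : ℕ) : ℕ :=
  ∑ S ∈ Finset.powersetCard k (Finset.univ : Finset V), steinerDist G (↑S : Set V)

/-- `v` is a cut vertex of `G`: `G` is connected but deleting `v` disconnects it. -/
def IsCutVertex {V : Type*} (G : SimpleGraph V) (v : V) : Prop :=
  G.Connected ∧ ¬ (G.induce {u | u ≠ v}).Connected

/-- The induced subgraph on `B` is connected and has no cut vertex. -/
def IsBiconnectedSet {V : Type*} (G : SimpleGraph V) (B : Set V) : Prop :=
  (G.induce B).Connected ∧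
    ∀ v ∈ B, (B \ {v}).Nonempty → (G.induce (B \ {v})).Connected

/-- `B` is a block of `G`: a maximal set inducing a connected subgraph without cut
vertex (with at least two vertices). -/
def IsBlock {V : Type*} (G : SimpleGraph V) (B : Set V) : Prop :=
  2 ≤ B.ncard ∧ IsBiconnectedSet G B ∧
    ∀ B' : Set V, B ⊆ B' → 2 ≤ B'.ncard → IsBiconnectedSet G B' → B' = B

/-- A block graph: a connected graph in which every block is a clique. -/
def IsBlockGraph {V : Type*} (G : SimpleGraph V) : Prop :=
  G.Connected ∧ ∀ B : Set V, IsBlock G B → G.IsClique B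

section Connectivity

variable {V : Type*} {G : SimpleGraph V}

theorem SimpleGraph.Walk.reachable_of_forall_adj {G' : SimpleGraph V} (P : V → Prop) {t : V}
    (hstep : ∀ a c, G.Adj a c → P a → G'.Reachable a t ∨ (P c ∧ G'.Adj a c)) :
    ∀ {a b : V} (_ : G.Walk a b), P a → (P b → G'.Reachable b t) → G'.Reachable a t
  | _, _, .nil, ha, hb => hb ha
  | _, _, .cons h p, ha, hb =>
    (hstep _ _ h ha).elim id fun ⟨hc, hadj⟩ =>
      hadj.reachable.trans (reachable_of_forall_adj P hstep p hc hb)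

theorem SimpleGraph.Subgraph.Connected.reachable_spanningCoe {H : G.Subgraph} (hH : H.Connected)
    {a b : V} (ha : a ∈ H.verts) (hb : b ∈ H.verts) : H.spanningCoe.Reachable a b :=
  (hH ⟨a, ha⟩ ⟨b, hb⟩).map H.coeEmbeddingSpanningCoe.toHom

theorem SimpleGraph.Subgraph.reachable_coe_of_walk_spanningCoe {H : G.Subgraph} :
    ∀ {a b : V} (_ : H.spanningCoe.Walk a b) (ha : a ∈ H.verts) (hb : b ∈ H.verts),
      H.coe.Reachable ⟨a, ha⟩ ⟨b, hb⟩
  | _, _, .nil, _, _ => .rfl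
  | _, _, .cons h p, ha, hb =>
    (show H.coe.Adj ⟨_, ha⟩ ⟨_, H.edge_vert h.symm⟩ from h).reachable.trans
      (reachable_coe_of_walk_spanningCoe p _ hb)

theorem SimpleGraph.Subgraph.connected_of_forall_reachable_spanningCoe {H : G.Subgraph} {t : V}
    (ht : t ∈ H.verts) (h : ∀ a ∈ H.verts, H.spanningCoe.Reachable a t) : H.Connected := by
  rw [Subgraph.connected_iff', connected_iff_exists_forall_reachable]
  exact ⟨⟨t, ht⟩, fun ⟨a, ha⟩ =>
    ((h a ha).elim fun p => reachable_coe_of_walk_spanningCoe p ha ht).symm⟩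

theorem SimpleGraph.deleteEdges_setOf_mem_eq_deleteIncidenceSet (v : V) :
    G.deleteEdges {e | v ∈ e} = G.deleteIncidenceSet v := by
  ext a b
  simp only [deleteEdges_adj, deleteIncidenceSet_adj, Set.mem_ofPred_eq, Sym2.mem_iff]
  grind

theorem SimpleGraph.Subgraph.Connected.reachable_deleteIncidenceSet {H : G.Subgraph}
    (hH : H.Connected) {v a b : V} (hv : v ∉ H.verts) (ha : a ∈ H.verts) (hb : b ∈ H.verts) :
    (G.deleteIncidenceSet v).Reachable a b :=
  (hH.reachable_spanningCoe ha hb).mono fun _ _ h => deleteIncidenceSet_adj.mpr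
    ⟨H.adj_sub h, ne_of_mem_of_not_mem (H.edge_vert h) hv,
      ne_of_mem_of_not_mem (H.edge_vert h.symm) hv⟩

theorem SimpleGraph.reachable_deleteIncidenceSet_of_connected_induce {v a b : V}
    (h : (G.induce {u | u ≠ v}).Connected) (ha : a ≠ v) (hb : b ≠ v) :
    (G.deleteIncidenceSet v).Reachable a b :=
  (h.preconnected ⟨a, ha⟩ ⟨b, hb⟩).map
    ⟨Subtype.val, fun {x y} hxy => deleteIncidenceSet_adj.mpr ⟨hxy, x.2, y.2⟩⟩

theorem SimpleGraph.Walk.notMem_support_of_deleteIncidenceSet {v x y : V}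
    (p : (G.deleteIncidenceSet v).Walk x y) (hxy : x ≠ y) : v ∉ p.support := fun h =>
  (support_deleteIncidenceSet_subset G v
    (mem_support_of_mem_walk_support p (not_nil_of_ne hxy) h)).2 rfl

theorem SimpleGraph.Walk.IsPath.connected_induce_support_diff_start {u w : V} {p : G.Walk u w}
    (hp : p.IsPath) (hne : ¬ p.Nil) :
    (G.induce ({z | z ∈ p.support} \ {u})).Connected := by
  have hnodup := hp.support_nodup
  rw [← p.cons_tail_support, List.nodup_cons] at hnodup
  have : {z | z ∈ p.support} \ {u} = {z | z ∈ p.tail.support} := by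
    ext z
    rw [p.support_tail_of_not_nil hne, ← p.cons_tail_support]
    simp only [Set.mem_sdiff, Set.mem_ofPred_eq, List.mem_cons, Set.mem_singleton_iff]
    grind
  rw [this]
  exact p.tail.connected_induce_support

theorem SimpleGraph.Walk.IsCycle.isBiconnectedSet {u : V} {c : G.Walk u u} (hc : c.IsCycle) :
    IsBiconnectedSet G {z | z ∈ c.support} := by
  refine ⟨c.connected_induce_support, fun w hw _ => ?_⟩
  set c' := c.rotate w hw
  have hc' : c'.IsCycle := hc.rotate hw
  have hnil : ¬ c'.Nil := hc'.not_nil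
  have hq : c'.tail.reverse.IsPath := hc'.isPath_tail.reverse
  have hqnil : ¬ c'.tail.reverse.Nil := not_nil_of_ne (c'.adj_snd hnil).ne
  have hmem : ∀ z, z ∈ c.support ↔ z ∈ c'.tail.reverse.support := by
    intro z
    rw [← mem_support_rotate_iff c w hw, support_reverse, List.mem_reverse,
      c'.support_tail_of_not_nil hnil]
    refine ⟨fun h => ?_, List.mem_of_mem_tail⟩
    rw [← c'.cons_tail_support] at h
    rcases List.mem_cons.mp h with rfl | h
    exacts [c'.end_mem_tail_support hnil, h]
  have hset : {z | z ∈ c.support} = {z | z ∈ c'.tail.reverse.support} := Set.ext hmem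
  rw [hset]
  exact hq.connected_induce_support_diff_start hqnil

end Connectivity

section Blocks

variable {V : Type*} {G : SimpleGraph V}

theorem exists_isBlock_superset [Finite V] {B₀ : Set V} (h2 : 2 ≤ B₀.ncard)
    (hB₀ : IsBiconnectedSet G B₀) : ∃ B, B₀ ⊆ B ∧ IsBlock G B := by
  obtain ⟨B, hsub, hmax⟩ := Finite.exists_le_maximal
    (p := fun B : Set V => 2 ≤ B.ncard ∧ IsBiconnectedSet G B) ⟨h2, hB₀⟩
  exact ⟨B, hsub, hmax.1.1, hmax.1.2, fun B' hBB' h2' hB' => hmax.eq_of_ge ⟨h2', hB'⟩ hBB'⟩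

theorem IsBlockGraph.adj_of_reachable_deleteIncidenceSet [Finite V] (hG : IsBlockGraph G)
    {v x y : V} (hx : G.Adj v x) (hy : G.Adj v y) (hxy : x ≠ y)
    (h : (G.deleteIncidenceSet v).Reachable x y) : G.Adj x y := by
  obtain ⟨p, hp⟩ := h.exists_isPath
  set q := p.mapLe (G.deleteIncidenceSet_le v)
  have hvq : v ∉ q.support := by
    rw [Walk.support_mapLe_eq_support]
    exact p.notMem_support_of_deleteIncidenceSet hxy
  have hc : (Walk.cons hx (q.concat hy.symm)).IsCycle := by
    refine (Walk.cons_isCycle_iff _ _).mpr ⟨(hp.mapLe _).concat hvq _, fun he => ?_⟩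
    rw [Walk.edges_concat, List.concat_eq_append, List.mem_append, List.mem_singleton] at he
    rcases he with he | he
    · exact hvq (q.fst_mem_support_of_mem_edges he)
    · exact hxy (Sym2.congr_left.mp (Sym2.eq_swap.trans he))
  have hsub : {v, x, y} ⊆ {z | z ∈ (Walk.cons hx (q.concat hy.symm)).support} := by
    simp [Set.insert_subset_iff]
  have h2 : 2 ≤ {z | z ∈ (Walk.cons hx (q.concat hy.symm)).support}.ncard :=
    (Set.ncard_pair hx.ne).symm.le.trans
      (Set.ncard_le_ncard ((Set.insert_subset_insert (by simp)).trans hsub))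
  obtain ⟨B, hcB, hB⟩ := exists_isBlock_superset h2 hc.isBiconnectedSet
  exact hG.2 B hB (hcB (hsub (by simp))) (hcB (hsub (by simp))) hxy

end Blocks

section Star

variable {V : Type*} {G : SimpleGraph V}

def starSubgraph (c : V) (N : Set V) (h : ∀ x ∈ N, c ≠ x → G.Adj c x) : G.Subgraph where
  verts := insert c N
  Adj a b := (a = c ∧ b ∈ N ∧ b ≠ c) ∨ (b = c ∧ a ∈ N ∧ a ≠ c)
  adj_sub := by
    rintro a b (⟨rfl, hb, hbc⟩ | ⟨rfl, ha, hac⟩)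
    exacts [h b hb hbc.symm, (h a ha hac.symm).symm]
  edge_vert := by
    rintro a b (⟨rfl, -, -⟩ | ⟨-, ha, -⟩)
    exacts [Set.mem_insert _ _, Set.mem_insert_of_mem _ ha]
  symm := ⟨fun _ _ => Or.symm⟩

theorem edgeSet_starSubgraph_subset {c : V} {N : Set V} (h : ∀ x ∈ N, c ≠ x → G.Adj c x) :
    (starSubgraph c N h).edgeSet ⊆ (fun x => s(c, x)) '' (N \ {c}) := by
  intro e
  induction e using Sym2.ind with
  | _ a b =>
    rintro (⟨rfl, hb, hbc⟩ | ⟨rfl, ha, hac⟩)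
    exacts [⟨b, ⟨hb, hbc⟩, rfl⟩, ⟨a, ⟨ha, hac⟩, Sym2.eq_swap⟩]

theorem SimpleGraph.Subgraph.Connected.exists_edgeSet_ncard_lt_of_isClique_neighborSet [Finite V]
    {H : G.Subgraph} (hH : H.Connected) {v x₀ : V} (hx₀ : x₀ ∈ H.neighborSet v)
    (hcl : G.IsClique (H.neighborSet v)) :
    ∃ H' : G.Subgraph, H'.Connected ∧ H.verts \ {v} ⊆ H'.verts ∧
      H'.edgeSet.ncard < H.edgeSet.ncard := by
  set N := H.neighborSet v
  have hvH : v ∈ H.verts := H.edge_vert hx₀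
  have hNv : insert x₀ N ⊆ H.verts \ {v} :=
    Set.insert_subset_iff.mpr ⟨⟨H.edge_vert hx₀.symm, (H.adj_sub hx₀).ne'⟩,
      fun x hx => ⟨H.edge_vert hx.symm, (H.adj_sub hx).ne'⟩⟩
  have hstar : ∀ x ∈ N, x₀ ≠ x → G.Adj x₀ x := fun x hx hne => hcl hx₀ hx hne
  set H' := H.deleteVerts {v} ⊔ starSubgraph x₀ N hstar
  refine ⟨H', ?_, Set.subset_union_left, ?_⟩
  · refine connected_of_forall_reachable_spanningCoe (t := x₀) (Or.inr (Set.mem_insert _ _))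
      fun a ha => ?_
    have ha' : a ∈ H.verts \ {v} := ha.elim id (hNv ·)
    obtain ⟨p⟩ := hH.reachable_spanningCoe ha'.1 hvH
    refine p.reachable_of_forall_adj (· ≠ v) (fun b c hbc hb => ?_) ha'.2 (absurd rfl)
    by_cases hc : c = v
    · subst hc
      by_cases hb₀ : b = x₀
      · exact .inl (hb₀ ▸ .rfl)
      · exact .inl (Adj.reachable (Or.inr (Or.inr ⟨rfl, hbc.symm, hb₀⟩)))
    · exact .inr ⟨hc, Or.inl (deleteVerts_adj.mpr
        ⟨H.edge_vert hbc, hb, H.edge_vert hbc.symm, hc, hbc⟩)⟩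
  · have hEv : ((fun x => s(v, x)) '' N).ncard = N.ncard :=
      Set.ncard_image_of_injective _ fun _ _ => Sym2.congr_right.mp
    have hdisj : Disjoint (H.deleteVerts {v}).edgeSet ((fun x => s(v, x)) '' N) := by
      rw [Set.disjoint_left]
      rintro _ he ⟨x, -, rfl⟩
      exact (deleteVerts_adj.mp he).2.1 rfl
    have hdel : (H.deleteVerts {v}).edgeSet.ncard + N.ncard ≤ H.edgeSet.ncard := by
      rw [← hEv, ← Set.ncard_union_eq hdisj]
      exact Set.ncard_le_ncard (Set.union_subset (edgeSet_mono deleteVerts_le)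
        (by rintro _ ⟨x, hx, rfl⟩; exact hx))
    have hstar_card : (starSubgraph x₀ N hstar).edgeSet.ncard + 1 ≤ N.ncard := by
      rw [← Set.ncard_sdiff_singleton_add_one hx₀]
      exact Nat.add_le_add_right ((Set.ncard_le_ncard (edgeSet_starSubgraph_subset hstar)).trans
        (Set.ncard_image_le (Set.toFinite _))) 1
    calc H'.edgeSet.ncard
        ≤ (H.deleteVerts {v}).edgeSet.ncard + (starSubgraph x₀ N hstar).edgeSet.ncard := by
          rw [edgeSet_sup]; exact Set.ncard_union_le _ _
      _ < H.edgeSet.ncard := by omega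

end Star

section SteinerTree

variable {V : Type*} {G : SimpleGraph V} {S : Set V} {H : G.Subgraph}

def IsSteinerTree (G : SimpleGraph V) (S : Set V) (H : G.Subgraph) : Prop :=
  H.Connected ∧ S ⊆ H.verts ∧ H.edgeSet.ncard = steinerDist G S

theorem steinerDist_le_ncard_edgeSet (hH : H.Connected) (hS : S ⊆ H.verts) :
    steinerDist G S ≤ H.edgeSet.ncard :=
  Nat.sInf_le ⟨H, hH, hS, rfl⟩

theorem IsSteinerTree.ncard_edgeSet_le (hT : IsSteinerTree G S H) {H' : G.Subgraph}
    (hH' : H'.Connected) (hS : S ⊆ H'.verts) : H.edgeSet.ncard ≤ H'.edgeSet.ncard :=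
  hT.2.2 ▸ steinerDist_le_ncard_edgeSet hH' hS

theorem exists_isSteinerTree (hG : G.Connected) (S : Set V) : ∃ H, IsSteinerTree G S H := by
  have htop : (⊤ : G.Subgraph).Connected :=
    Subgraph.connected_iff'.mpr ((Subgraph.topIso.connected_iff).mpr hG)
  obtain ⟨H, hH, hS, hd⟩ : steinerDist G S ∈ _ :=
    Nat.sInf_mem ⟨_, ⊤, htop, Set.subset_univ S, rfl⟩
  exact ⟨H, hH, hS, hd⟩

theorem IsSteinerTree.exists_reachable_mem [Finite V] (hT : IsSteinerTree G S H) {u v : V}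
    (hv : v ∈ H.verts) (hu : u ∈ H.verts) (huv : u ≠ v) :
    ∃ s ∈ S, (H.spanningCoe.deleteIncidenceSet v).Reachable u s := by
  by_contra! hu₀
  set K := H.spanningCoe.deleteIncidenceSet v
  set H₂ := H.deleteVerts {w | w ≠ v ∧ ∀ s ∈ S, ¬ K.Reachable w s}
  have hv₂ : v ∈ H₂.verts := ⟨hv, fun h => h.1 rfl⟩
  have hconn : H₂.Connected := by
    refine Subgraph.connected_of_forall_reachable_spanningCoe hv₂ fun a ha => ?_
    obtain ⟨p⟩ := hT.1.reachable_spanningCoe ha.1 hv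
    refine p.reachable_of_forall_adj (· ∈ H₂.verts) (fun b c hbc hb => ?_) ha (fun _ => .rfl)
    by_cases hbv : b = v
    · exact .inl (hbv ▸ .rfl)
    have hc : c ∈ H₂.verts := by
      refine ⟨H.edge_vert hbc.symm, fun ⟨hcv, hc⟩ => ?_⟩
      obtain ⟨s, hs, hbs⟩ : ∃ s ∈ S, K.Reachable b s := by
        by_contra! h
        exact hb.2 ⟨hbv, h⟩
      exact hc s hs ((deleteIncidenceSet_adj.mpr ⟨hbc.symm, hcv, hbv⟩).reachable.trans hbs)
    exact .inr ⟨hc, Subgraph.deleteVerts_adj.mpr ⟨hb.1, hb.2, hc.1, hc.2, hbc⟩⟩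
  have hS₂ : S ⊆ H₂.verts := fun s hs => ⟨hT.2.1 hs, fun h => h.2 s hs .rfl⟩
  obtain ⟨p⟩ := hT.1.reachable_spanningCoe hu hv
  have hlt : H₂.edgeSet.ncard < H.edgeSet.ncard :=
    Set.ncard_lt_ncard
      ((Set.ssubset_iff_of_subset (Subgraph.edgeSet_mono Subgraph.deleteVerts_le)).mpr
      ⟨s(u, p.snd), p.adj_snd (Walk.not_nil_of_ne huv),
        fun h => (Subgraph.deleteVerts_adj.mp h).2.1 ⟨huv, hu₀⟩⟩)
  exact (hT.ncard_edgeSet_le hconn hS₂).not_gt hlt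

theorem IsSteinerTree.notMem_verts [Finite V] (hG : IsBlockGraph G) (hT : IsSteinerTree G S H)
    (hS : S.Nonempty) {v : V} (hvS : v ∉ S)
    (hall : ∀ a ∈ S, ∀ b ∈ S, (G.deleteIncidenceSet v).Reachable a b) : v ∉ H.verts := by
  intro hv
  have hreach : ∀ x ∈ H.neighborSet v, ∃ s ∈ S, (G.deleteIncidenceSet v).Reachable x s := by
    intro x hx
    obtain ⟨s, hs, hxs⟩ := hT.exists_reachable_mem hv (H.edge_vert hx.symm) (H.adj_sub hx).ne'
    refine ⟨s, hs, hxs.mono fun a b h => ?_⟩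
    rw [deleteIncidenceSet_adj] at h ⊢
    exact ⟨H.adj_sub h.1, h.2⟩
  have hcl : G.IsClique (H.neighborSet v) := by
    intro x hx y hy hxy
    obtain ⟨s, hs, hxs⟩ := hreach x hx
    obtain ⟨t, ht, hyt⟩ := hreach y hy
    exact hG.adj_of_reachable_deleteIncidenceSet (H.adj_sub hx) (H.adj_sub hy) hxy
      ((hxs.trans (hall s hs t ht)).trans hyt.symm)
  obtain ⟨s₀, hs₀⟩ := hS
  obtain ⟨p⟩ := hT.1.reachable_spanningCoe hv (hT.2.1 hs₀)
  have hx₀ : p.snd ∈ H.neighborSet v :=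
    p.adj_snd (Walk.not_nil_of_ne (ne_of_mem_of_not_mem hs₀ hvS).symm)
  obtain ⟨H', hH', hsub, hlt⟩ := hT.1.exists_edgeSet_ncard_lt_of_isClique_neighborSet hx₀ hcl
  exact (hT.ncard_edgeSet_le hH' ((Set.subset_sdiff_singleton hT.2.1 hvS).trans hsub)).not_gt hlt

end SteinerTree

/-- In a block graph, a vertex v not in S is an inner vertex of some Steiner tree for S iff
v is a cut vertex and S does not lie in a single component of G minus v; moreover, in that
case v is an inner vertex of every Steiner tree for S. -/
theorem stmt9 {V : Type*} [Fintype V] (G : SimpleGraph V) (hbg : IsBlockGraph G)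
    (S : Finset V) (hS : S.Nonempty) (v : V) (hv : v ∉ S) :
    ((∃ H : G.Subgraph, H.Connected ∧ ↑S ⊆ H.verts ∧
        H.edgeSet.ncard = steinerDist G ↑S ∧ v ∈ H.verts) ↔
      (IsCutVertex G v ∧ ∃ a ∈ S, ∃ b ∈ S,
        ¬ (G.deleteEdges {e | v ∈ e}).Reachable a b))
    ∧ ((IsCutVertex G v ∧ ∃ a ∈ S, ∃ b ∈ S,
          ¬ (G.deleteEdges {e | v ∈ e}).Reachable a b) →
        ∀ H : G.Subgraph, H.Connected → ↑S ⊆ H.verts →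
          H.edgeSet.ncard = steinerDist G ↑S → v ∈ H.verts) := by
  rw [deleteEdges_setOf_mem_eq_deleteIncidenceSet]
  have mem_of_separated : (IsCutVertex G v ∧ ∃ a ∈ S, ∃ b ∈ S,
      ¬ (G.deleteIncidenceSet v).Reachable a b) →
      ∀ H : G.Subgraph, H.Connected → ↑S ⊆ H.verts →
        H.edgeSet.ncard = steinerDist G ↑S → v ∈ H.verts := by
    rintro ⟨-, a, ha, b, hb, hab⟩ H hH hSH -
    by_contra hvH
    exact hab (hH.reachable_deleteIncidenceSet hvH (hSH ha) (hSH hb))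
  refine ⟨⟨fun ⟨H, hH, hSH, hd, hvH⟩ => ?_, fun h => ?_⟩, mem_of_separated⟩
  · obtain ⟨a, ha, b, hb, hab⟩ :
        ∃ a ∈ S, ∃ b ∈ S, ¬ (G.deleteIncidenceSet v).Reachable a b := by
      by_contra! hall
      exact IsSteinerTree.notMem_verts hbg ⟨hH, hSH, hd⟩ (Finset.coe_nonempty.mpr hS) hv hall
        hvH
    refine ⟨⟨hbg.1, fun hconn => hab ?_⟩, a, ha, b, hb, hab⟩
    exact reachable_deleteIncidenceSet_of_connected_induce hconn (ne_of_mem_of_not_mem ha hv)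
      (ne_of_mem_of_not_mem hb hv)
  · obtain ⟨H, hH, hSH, hd⟩ := exists_isSteinerTree hbg.1 (S : Set V)
    exact ⟨H, hH, hSH, hd, mem_of_separated h H hH hSH hd⟩
end

section
/- Let G be a star-like block graph on n vertices with blocks B_1,…,B_t of orders b_1,…,b_t, and let 2 ≤ k ≤ n. Then SW_k(G) = (n−1)·C(n−1,k−1) − ∑_{i=1}^t C(b_i − 1, k). -/
open SimpleGraph Finset
open scoped Classical

/-!
Let `v` be the universal vertex. Every block contains `v`, two blocks sharing a vertex other
than `v` coincide (their union is still biconnected), and so a walk leaving a block through a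
vertex other than `v` must pass through `v`. A connected subgraph containing a set `T` has at
least `|T| - 1` edges, and a star attains this. Hence a `k`-set `S` has Steiner distance `k - 1`
if it contains `v` or lies inside a block (a clique), and `k` otherwise, where every connected
subgraph containing `S` also contains `v`. The `k`-sets of the first kind number
`C(n-1, k-1) + ∑ C(b_i - 1, k)`, and `k C(n, k) = n C(n-1, k-1)`.
-/

namespace SimpleGraph

variable {V : Type*} {G : SimpleGraph V}

lemma connected_induce_of_forall_adj {s : Set V} {c : V} (hc : c ∈ s)
    (hadj : ∀ u ∈ s, c ≠ u → G.Adj c u) : (G.induce s).Connected :=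
  Connected.of_isUniversal (v := ⟨c, hc⟩) fun u hu => hadj u u.2 fun h => hu (Subtype.ext h)

lemma IsClique.isBiconnectedSet {s : Set V} (hs : G.IsClique s) (hne : s.Nonempty) :
    IsBiconnectedSet G s := by
  have key : ∀ t ⊆ s, t.Nonempty → (G.induce t).Connected := fun t hts ⟨c, hc⟩ =>
    connected_induce_of_forall_adj hc fun _ hu hcu => hs (hts hc) (hts hu) hcu
  exact ⟨key s subset_rfl hne, fun _ _ hne' => key _ Set.sdiff_subset hne'⟩

lemma IsBlock.eq_of_subset [Finite V] {B B' : Set V} (hB : IsBlock G B) (h : B ⊆ B')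
    (hB' : IsBiconnectedSet G B') : B' = B :=
  hB.2.2 B' h (hB.1.trans (Set.ncard_le_ncard h)) hB'

lemma exists_isBlock_superset [Finite V] {s : Set V} (hs : 2 ≤ s.ncard)
    (hbi : IsBiconnectedSet G s) : ∃ B, IsBlock G B ∧ s ⊆ B := by
  obtain ⟨B, hsB, hB⟩ := Finite.exists_le_maximal hbi
  exact ⟨B, ⟨hs.trans (Set.ncard_le_ncard hsB), hB.prop,
    fun B' hBB' _ hB' => hB.eq_of_superset hB' hBB'⟩, hsB⟩

lemma exists_isBlock_of_adj [Finite V] {x y : V} (h : G.Adj x y) :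
    ∃ B, IsBlock G B ∧ x ∈ B ∧ y ∈ B := by
  obtain ⟨B, hB, hxyB⟩ := exists_isBlock_superset (Set.ncard_pair h.ne).ge
    ((isClique_pair.mpr fun _ => h).isBiconnectedSet (Set.insert_nonempty x {y}))
  exact ⟨B, hB, hxyB (Set.mem_insert x {y}), hxyB (Set.mem_insert_of_mem x rfl)⟩

namespace IsUniversal

variable {v : V}

lemma isBiconnectedSet (hv : G.IsUniversal v) {s : Set V} (hvs : v ∈ s)
    (hs : (s \ {v}).Nonempty → (G.induce (s \ {v})).Connected) : IsBiconnectedSet G s := by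
  have key : ∀ t : Set V, v ∈ t → (G.induce t).Connected := fun _ ht =>
    connected_induce_of_forall_adj ht fun _ _ hvu => hv hvu
  refine ⟨key s hvs, fun w _ hne => ?_⟩
  obtain rfl | hwv := eq_or_ne w v
  · exact hs hne
  · exact key _ ⟨hvs, hwv.symm⟩

variable [Finite V]

lemma mem_of_isBlock (hv : G.IsUniversal v) {B : Set V} (hB : IsBlock G B) : v ∈ B := by
  by_contra hvB
  have hbi : IsBiconnectedSet G (insert v B) :=
    hv.isBiconnectedSet (Set.mem_insert v B) fun _ => by
      rw [Set.insert_sdiff_self_of_notMem hvB]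
      exact hB.2.1.1
  exact hvB (hB.eq_of_subset (Set.subset_insert v B) hbi ▸ Set.mem_insert v B)

lemma eq_of_isBlock_of_mem (hv : G.IsUniversal v) {B C : Set V} (hB : IsBlock G B)
    (hC : IsBlock G C) {u : V} (hu : u ≠ v) (huB : u ∈ B) (huC : u ∈ C) : B = C := by
  have hvB := hv.mem_of_isBlock hB
  have huB' : u ∈ B \ {v} := ⟨huB, hu⟩
  have huC' : u ∈ C \ {v} := ⟨huC, hu⟩
  have hbi : IsBiconnectedSet G (B ∪ C) :=
    hv.isBiconnectedSet (Or.inl hvB) fun _ => by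
      rw [Set.union_sdiff_distrib]
      exact induce_union_connected (hB.2.1.2 v hvB ⟨u, huB'⟩).preconnected
        (hC.2.1.2 v (hv.mem_of_isBlock hC) ⟨u, huC'⟩).preconnected ⟨u, huB', huC'⟩
  have hCB : C ⊆ B := fun x hx =>
    hB.eq_of_subset Set.subset_union_left hbi ▸ Set.mem_union_right B hx
  exact hC.eq_of_subset hCB hB.2.1

lemma mem_of_isBlock_of_adj (hv : G.IsUniversal v) {B : Set V} (hB : IsBlock G B) {x y : V}
    (hxv : x ≠ v) (hxy : G.Adj x y) (hxB : x ∈ B) : y ∈ B := by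
  obtain ⟨D, hD, hxD, hyD⟩ := exists_isBlock_of_adj hxy
  exact hv.eq_of_isBlock_of_mem hD hB hxv hxD hxB ▸ hyD

lemma mem_support_of_walk (hv : G.IsUniversal v) {B : Set V} (hB : IsBlock G B) {x y : V}
    (p : G.Walk x y) (hxB : x ∈ B) (hxv : x ≠ v) (hyB : y ∉ B) : v ∈ p.support := by
  induction p with
  | nil => exact absurd hxB hyB
  | @cons x z y hxz p ih =>
    rw [Walk.support_cons]
    obtain rfl | hzv := eq_or_ne z v
    · exact List.mem_cons_of_mem _ p.start_mem_support
    · exact List.mem_cons_of_mem _ (ih (hv.mem_of_isBlock_of_adj hB hxv hxz hxB) hzv hyB)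

lemma mem_verts_of_connected (hv : G.IsUniversal v) {B : Set V} (hB : IsBlock G B)
    {H : G.Subgraph} (hH : H.Connected) {x y : V} (hx : x ∈ H.verts) (hy : y ∈ H.verts)
    (hxB : x ∈ B) (hxv : x ≠ v) (hyB : y ∉ B) : v ∈ H.verts := by
  obtain ⟨p⟩ := hH.coe.preconnected ⟨x, hx⟩ ⟨y, hy⟩
  have hvp := hv.mem_support_of_walk hB (p.map H.hom) hxB hxv hyB
  rw [Walk.support_map, List.mem_map] at hvp
  obtain ⟨a, -, rfl⟩ := hvp
  exact a.2

end IsUniversal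

def starSubgraph (G : SimpleGraph V) (c : V) (D : Finset V) (hD : ∀ u ∈ D, G.Adj c u) :
    G.Subgraph where
  verts := insert c ↑D
  Adj x y := (x = c ∧ y ∈ D) ∨ (y = c ∧ x ∈ D)
  adj_sub := by
    rintro x y (⟨rfl, hy⟩ | ⟨rfl, hx⟩)
    exacts [hD y hy, (hD x hx).symm]
  edge_vert := by
    rintro x y (⟨rfl, -⟩ | ⟨-, hx⟩)
    exacts [Set.mem_insert x _, Set.mem_insert_of_mem _ hx]
  symm := ⟨fun _ _ => Or.symm⟩

lemma connected_starSubgraph (c : V) (D : Finset V) (hD : ∀ u ∈ D, G.Adj c u) :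
    (starSubgraph G c D hD).Connected := by
  rw [Subgraph.connected_iff']
  refine Connected.of_isUniversal (v := ⟨c, Set.mem_insert c _⟩) fun ⟨u, hu⟩ hcu => ?_
  have hu' : u ≠ c := fun h => hcu (Subtype.ext h.symm)
  exact Or.inl ⟨rfl, (Set.mem_insert_iff.mp hu).resolve_left hu'⟩

lemma ncard_edgeSet_starSubgraph (c : V) (D : Finset V) (hD : ∀ u ∈ D, G.Adj c u) :
    (starSubgraph G c D hD).edgeSet.ncard = D.card := by
  have hedges : (starSubgraph G c D hD).edgeSet = (fun u => s(c, u)) '' ↑D := by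
    ext ⟨x, y⟩
    simp only [Subgraph.mem_edgeSet, starSubgraph, Set.mem_image, mem_coe, Sym2.eq_iff]
    aesop
  rw [hedges, Set.ncard_image_of_injective _ fun _ _ h => Sym2.congr_right.mp h,
    Set.ncard_coe_finset]

lemma Subgraph.Connected.ncard_verts_le [Finite V] {H : G.Subgraph} (hH : H.Connected) :
    H.verts.ncard ≤ H.edgeSet.ncard + 1 := by
  have hcard := hH.coe.card_vert_le_card_edgeSet_add_one
  rwa [Nat.card_coe_set_eq, Nat.card_congr (Equiv.Set.image _ _ (Sym2.map.injective
    Subtype.val_injective)), Nat.card_coe_set_eq, H.image_coe_edgeSet_coe] at hcard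

lemma steinerDist_eq_of_forall_adj [Finite V] {S T : Finset V} {c : V} (hc : c ∈ T)
    (hadj : ∀ u ∈ T, u ≠ c → G.Adj c u) (hST : S ⊆ T)
    (hT : ∀ H : G.Subgraph, H.Connected → ↑S ⊆ H.verts → ↑T ⊆ H.verts) :
    steinerDist G ↑S = T.card - 1 := by
  have hD : ∀ u ∈ T.erase c, G.Adj c u := fun u hu =>
    hadj u (mem_of_mem_erase hu) (ne_of_mem_erase hu)
  have hstar : T.card - 1 ∈
      {m | ∃ H : G.Subgraph, H.Connected ∧ ↑S ⊆ H.verts ∧ H.edgeSet.ncard = m} := by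
    refine ⟨starSubgraph G c (T.erase c) hD, connected_starSubgraph c _ hD, ?_, ?_⟩
    · change (S : Set V) ⊆ insert c ((T.erase c : Finset V) : Set V)
      rw [← coe_insert, insert_erase hc]
      exact_mod_cast hST
    · rw [ncard_edgeSet_starSubgraph, card_erase_of_mem hc]
  obtain ⟨H, hH, hSH, hm⟩ := Nat.sInf_mem ⟨_, hstar⟩
  refine le_antisymm (Nat.sInf_le hstar) ?_
  rw [steinerDist, ← hm]
  have hTH := Set.ncard_le_ncard (hT H hH hSH)
  rw [Set.ncard_coe_finset] at hTH
  have := hH.ncard_verts_le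
  omega

namespace IsUniversal

variable {v : V}

lemma steinerDist_eq_card_sub_one [Finite V] (hv : G.IsUniversal v)
    (hcl : ∀ B, IsBlock G B → G.IsClique B) {S : Finset V} (hS : S.Nonempty)
    (h : v ∈ S ∨ ∃ B, IsBlock G B ∧ ↑S ⊆ B) : steinerDist G ↑S = S.card - 1 := by
  obtain hvS | ⟨B, hB, hSB⟩ := h
  · exact steinerDist_eq_of_forall_adj hvS (fun _ _ hu => hv hu.symm) subset_rfl
      fun _ _ h => h
  · obtain ⟨c, hc⟩ := hS
    exact steinerDist_eq_of_forall_adj hc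
      (fun _ hu hcu => hcl B hB (hSB hc) (hSB hu) hcu.symm) subset_rfl fun _ _ h => h

lemma steinerDist_eq_card [Finite V] (hv : G.IsUniversal v)
    {S : Finset V} (hS : S.Nonempty) (hvS : v ∉ S) (hSB : ∀ B, IsBlock G B → ¬ ↑S ⊆ B) :
    steinerDist G ↑S = S.card := by
  have h := steinerDist_eq_of_forall_adj (mem_insert_self v S) (fun _ _ hu => hv hu.symm)
    (subset_insert v S) fun H hH hSH => by
      obtain ⟨x, hx⟩ := hS
      have hxv : x ≠ v := ne_of_mem_of_not_mem hx hvS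
      obtain ⟨B, hB, -, hxB⟩ := exists_isBlock_of_adj (hv hxv.symm)
      obtain ⟨y, hy, hyB⟩ := Set.not_subset.mp (hSB B hB)
      rw [coe_insert]
      exact Set.insert_subset
        (hv.mem_verts_of_connected hB hH (hSH hx) (hSH hy) hxB hxv hyB) hSH
  rwa [card_insert_of_notMem hvS, Nat.add_sub_cancel] at h

lemma steinerWiener_add_card_filter [Fintype V] (hv : G.IsUniversal v)
    (hcl : ∀ B, IsBlock G B → G.IsClique B) {k : ℕ} (hk : 1 ≤ k) :
    steinerWiener G k + #{S ∈ powersetCard k univ | v ∈ S ∨ ∃ B, IsBlock G B ∧ ↑S ⊆ B}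
      = (Fintype.card V).choose k * k := by
  rw [card_filter, steinerWiener, ← sum_add_distrib, ← card_univ, ← card_powersetCard,
    ← smul_eq_mul, ← sum_const]
  refine sum_congr rfl fun S hS => ?_
  obtain ⟨-, hSk⟩ := mem_powersetCard.mp hS
  have hSne : S.Nonempty := card_pos.mp (by omega)
  split_ifs with h
  · rw [hv.steinerDist_eq_card_sub_one hcl hSne h]
    omega
  · push Not at h
    rw [hv.steinerDist_eq_card hSne h.1 h.2, hSk, add_zero]

end IsUniversal

end SimpleGraph

lemma card_filter_mem_or_subset {α ι : Type*} [Fintype α] [Fintype ι] {v : α} {k : ℕ}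
    (hk : 1 ≤ k) (A : ι → Set α) (hvA : ∀ i, v ∈ A i)
    (hA : Pairwise fun i j => A i ∩ A j ⊆ {v}) :
    #{S ∈ powersetCard k (univ : Finset α) | v ∈ S ∨ ∃ i, ↑S ⊆ A i}
      = (Fintype.card α - 1).choose (k - 1) + ∑ i, ((A i).ncard - 1).choose k := by
  have hsplit : {S ∈ powersetCard k (univ : Finset α) | v ∈ S ∨ ∃ i, ↑S ⊆ A i}
      = {S ∈ powersetCard k (univ : Finset α) | v ∈ S} ∪
        univ.biUnion fun i => powersetCard k ((A i).toFinset.erase v) := by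
    ext S
    simp only [mem_filter, mem_union, mem_biUnion, mem_univ, true_and, mem_powersetCard,
      subset_univ, subset_erase, Set.subset_toFinset]
    tauto
  have hmem : #{S ∈ powersetCard k (univ : Finset α) | v ∈ S}
      = (Fintype.card α - 1).choose (k - 1) := by
    simpa using card_filter_powersetCard_subset {v} univ k (subset_univ _) (by simpa)
  rw [hsplit, card_union_of_disjoint, card_biUnion, hmem]
  · congr 1
    refine sum_congr rfl fun i _ => ?_
    rw [card_powersetCard, card_erase_of_mem (by simpa using hvA i),
      Set.ncard_eq_toFinset_card']
  · intro i _ j _ hij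
    refine disjoint_left.mpr fun S hSi hSj => ?_
    obtain ⟨hSi, hSk⟩ := mem_powersetCard.mp hSi
    obtain ⟨x, hx⟩ : S.Nonempty := card_pos.mp (by omega)
    have hxi := mem_erase.mp (hSi hx)
    have hxj := mem_erase.mp ((mem_powersetCard.mp hSj).1 hx)
    exact hxi.1 (hA hij ⟨by simpa using hxi.2, by simpa using hxj.2⟩)
  · refine disjoint_left.mpr fun S hS hS' => ?_
    obtain ⟨i, -, hSi⟩ := mem_biUnion.mp hS'
    exact (mem_erase.mp ((mem_powersetCard.mp hSi).1 (mem_filter.mp hS).2)).1 rfl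

theorem stmt10_general {V : Type*} [Fintype V] (G : SimpleGraph V) (hbg : IsBlockGraph G)
    (hstar : ∃ v : V, ∀ u : V, u ≠ v → G.Adj v u)
    (t : ℕ) (Bl : Fin t → Set V) (hB : ∀ i, IsBlock G (Bl i))
    (hinj : Function.Injective Bl) (hall : ∀ C : Set V, IsBlock G C → ∃ i, C = Bl i)
    (k : ℕ) (hk : 2 ≤ k) :
    steinerWiener G k + ∑ i : Fin t, ((Bl i).ncard - 1).choose k
      = (Fintype.card V - 1) * (Fintype.card V - 1).choose (k - 1) := by
  obtain ⟨v, hv⟩ := hstar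
  have huniv : G.IsUniversal v := fun u hu => hv u hu.symm
  have hblocks (S : Finset V) : (∃ B, IsBlock G B ∧ ↑S ⊆ B) ↔ ∃ i, ↑S ⊆ Bl i :=
    ⟨fun ⟨B, hB', hSB⟩ => (hall B hB').imp fun i (hi : B = Bl i) => hi ▸ hSB,
      fun ⟨i, hi⟩ => ⟨Bl i, hB i, hi⟩⟩
  have hcount : #{S ∈ powersetCard k univ | v ∈ S ∨ ∃ B, IsBlock G B ∧ ↑S ⊆ B}
      = (Fintype.card V - 1).choose (k - 1) + ∑ i, ((Bl i).ncard - 1).choose k := by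
    convert card_filter_mem_or_subset (k := k) (by omega) Bl
      (fun i => huniv.mem_of_isBlock (hB i)) fun i j hij x ⟨hxi, hxj⟩ => by_contra fun hxv =>
        hij (hinj (huniv.eq_of_isBlock_of_mem (hB i) (hB j) hxv hxi hxj)) using 2
    ext S
    simp only [mem_filter, hblocks]
  have hsum := huniv.steinerWiener_add_card_filter hbg.2 (k := k) (by omega)
  obtain ⟨n, hn⟩ : ∃ n, Fintype.card V = n + 1 :=
    Nat.exists_eq_add_one.mpr (Fintype.card_pos_iff.mpr ⟨v⟩)
  obtain ⟨j, rfl⟩ : ∃ j, k = j + 1 := Nat.exists_eq_add_one.mpr (by omega)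
  rw [hcount, hn, ← Nat.add_one_mul_choose_eq, add_one_mul, Nat.add_sub_cancel,
    Nat.add_sub_cancel] at hsum
  rw [hn, Nat.add_sub_cancel, Nat.add_sub_cancel]
  omega

/-- Steiner k-Wiener index of a star-like block graph (a block graph with a universal
vertex) with blocks of orders b_1,...,b_t:
SW_k(G) = (n-1)*C(n-1,k-1) - sum_i C(b_i - 1, k), stated additively. -/
theorem stmt10 {V : Type*} [Fintype V] (G : SimpleGraph V) (hbg : IsBlockGraph G)
    (hstar : ∃ v : V, ∀ u : V, u ≠ v → G.Adj v u)
    (t : ℕ) (Bl : Fin t → Set V) (hB : ∀ i, IsBlock G (Bl i))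
    (hinj : Function.Injective Bl) (hall : ∀ C : Set V, IsBlock G C → ∃ i, C = Bl i)
    (k : ℕ) (hk : 2 ≤ k) (hk' : k ≤ Fintype.card V) :
    steinerWiener G k + ∑ i : Fin t, ((Bl i).ncard - 1).choose k
      = (Fintype.card V - 1) * (Fintype.card V - 1).choose (k - 1) :=
  stmt10_general G hbg hstar t Bl hB hinj hall k hk
end
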